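/- Let Δ ⊆ [0,1] be the Cantor set, write [0,1] \ Δ = ∪_{n≥1} (a_n, b_n) with a_n, b_n ∈ Δ, and let Φ_Δ = {φ ∈ C([0,1]) : the restriction of φ to [a_n, b_n] is affine for every n ≥ 1}, a closed linear subspace of C([0,1]) that separates points and contains the constant functions. Then the Φ_Δ-Choquet boundary of [0,1] equals the Cantor set: ∂_{Φ_Δ}([0,1]) = Δ. -/
import Mathlib


open MeasureTheory Set


section DefsM

variable {K : Type*} [TopologicalSpace K] [CompactSpace K]

/-- `M_x(Φ)`: the `Φ`-representing probability measures for `x`. -/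
def MxSet (Φ : Submodule ℝ C(K, ℝ)) [MeasurableSpace K] (x : K) :
    Set (MeasureTheory.ProbabilityMeasure K) :=
  {P | ∀ φ : C(K, ℝ), φ ∈ Φ → φ x = ∫ y, φ y ∂(P : MeasureTheory.Measure K)}

/-- The `Φ`-Choquet boundary `∂_Φ(K) = {x ∈ K : M_x(Φ) = {δ_x}}`. -/
def ChoquetBoundary (Φ : Submodule ℝ C(K, ℝ)) [MeasurableSpace K] : Set K :=
  {x | ∀ P : MeasureTheory.ProbabilityMeasure K, P ∈ MxSet Φ x →
    (P : MeasureTheory.Measure K) = MeasureTheory.Measure.dirac x}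

end DefsM

/-- `φ : C([0,1], ℝ)` is affine on `[a, b]`. -/
def AffineOnIcc (φ : C(unitInterval, ℝ)) (a b : ℝ) : Prop :=
  ∀ x y : unitInterval, (x : ℝ) ∈ Set.Icc a b → (y : ℝ) ∈ Set.Icc a b →
    ∀ t : ℝ, t ∈ Set.Icc (0 : ℝ) 1 → ∀ z : unitInterval,
      (z : ℝ) = t * x + (1 - t) * y → φ z = t * φ x + (1 - t) * φ y

/-- `Φ_Δ`: the continuous functions on `[0,1]` whose restriction to each `[a_n, b_n]` is
affine. -/
def PhiDelta (a b : ℕ → ℝ) : Submodule ℝ C(unitInterval, ℝ) where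
  carrier := {φ | ∀ n : ℕ, AffineOnIcc φ (a n) (b n)}
  add_mem' := by
    intro φ ψ hφ hψ n x y hx hy t ht z hz
    simp only [ContinuousMap.add_apply]
    rw [hφ n x y hx hy t ht z hz, hψ n x y hx hy t ht z hz]
    ring
  zero_mem' := by
    intro n x y hx hy t ht z hz
    simp
  smul_mem' := by
    intro c φ hφ n x y hx hy t ht z hz
    simp only [ContinuousMap.smul_apply, smul_eq_mul]
    rw [hφ n x y hx hy t ht z hz]
    ring

lemma mem_phiDelta {a b : ℕ → ℝ} {φ : C(unitInterval, ℝ)} :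
    φ ∈ PhiDelta a b ↔ ∀ n : ℕ, AffineOnIcc φ (a n) (b n) := Iff.rfl

lemma affine_closed (c d : ℝ) : IsClosed {φ : C(unitInterval, ℝ) | AffineOnIcc φ c d} := by
  have h : {φ : C(unitInterval, ℝ) | AffineOnIcc φ c d} =
      ⋂ (x : unitInterval) (y : unitInterval) (_ : (x : ℝ) ∈ Set.Icc c d)
        (_ : (y : ℝ) ∈ Set.Icc c d) (t : ℝ) (_ : t ∈ Set.Icc (0:ℝ) 1) (z : unitInterval)
        (_ : (z : ℝ) = t * x + (1 - t) * y),
        {φ : C(unitInterval, ℝ) | φ z = t * φ x + (1 - t) * φ y} := by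
    ext φ
    simp only [mem_setOf_eq, mem_iInter]
    exact ⟨fun h x y hx hy t ht z hz => h x y hx hy t ht z hz,
      fun h x y hx hy t ht z hz => h x y hx hy t ht z hz⟩
  rw [h]
  refine isClosed_iInter fun x => isClosed_iInter fun y => isClosed_iInter fun _ =>
    isClosed_iInter fun _ => isClosed_iInter fun t => isClosed_iInter fun _ =>
    isClosed_iInter fun z => isClosed_iInter fun _ => ?_
  exact isClosed_eq (continuous_eval_const z)
    (((continuous_eval_const x).const_smul t).add
      ((continuous_eval_const y).const_smul (1 - t)))

lemma integral_two_point (c d : ℝ) (hc : 0 ≤ c) (hd : 0 ≤ d) (A B : unitInterval)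
    (f : unitInterval → ℝ) (hf : Continuous f) :
    ∫ y, f y ∂(ENNReal.ofReal c • Measure.dirac A + ENNReal.ofReal d • Measure.dirac B)
      = c * f A + d * f B := by
  have hA : Integrable f (ENNReal.ofReal c • Measure.dirac A) := by
    have : IsFiniteMeasure (ENNReal.ofReal c • Measure.dirac A) := by
      constructor
      simp [Measure.smul_apply]
    rw [← integrableOn_univ]
    exact hf.continuousOn.integrableOn_compact' isCompact_univ MeasurableSet.univ
  have hB : Integrable f (ENNReal.ofReal d • Measure.dirac B) := by
    have : IsFiniteMeasure (ENNReal.ofReal d • Measure.dirac B) := by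
      constructor
      simp [Measure.smul_apply]
    rw [← integrableOn_univ]
    exact hf.continuousOn.integrableOn_compact' isCompact_univ MeasurableSet.univ
  rw [integral_add_measure hA hB, integral_smul_measure, integral_smul_measure,
    integral_dirac, integral_dirac, ENNReal.toReal_ofReal hc, ENNReal.toReal_ofReal hd,
    smul_eq_mul, smul_eq_mul]

noncomputable def tent (p : ℝ) : C(unitInterval, ℝ) :=
  ⟨fun z => 1 - |(z : ℝ) - p|, by fun_prop⟩

lemma tent_affineOn (p c d : ℝ) (hp : p ∉ Set.Ioo c d) : AffineOnIcc (tent p) c d := by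
  intro u v hu hv t ht z hz
  simp only [tent, ContinuousMap.coe_mk]
  obtain ⟨ht0, ht1⟩ := ht
  rcases le_or_gt p c with hpc | hpc
  · have hu' : p ≤ (u : ℝ) := le_trans hpc hu.1
    have hv' : p ≤ (v : ℝ) := le_trans hpc hv.1
    have hz' : p ≤ (z : ℝ) := by nlinarith
    rw [abs_of_nonneg (by linarith), abs_of_nonneg (by linarith),
      abs_of_nonneg (by linarith)]
    linarith [hz]
  · have hdp : d ≤ p := by
      by_contra h
      exact hp ⟨hpc, not_le.1 h⟩
    have hu' : (u : ℝ) ≤ p := le_trans hu.2 hdp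
    have hv' : (v : ℝ) ≤ p := le_trans hv.2 hdp
    have hz' : (z : ℝ) ≤ p := by nlinarith
    rw [abs_of_nonpos (by linarith), abs_of_nonpos (by linarith),
      abs_of_nonpos (by linarith)]
    linarith [hz]

lemma eq_dirac_of_null_compl (P : Measure unitInterval) [IsProbabilityMeasure P]
    (x : unitInterval) (h : P {x}ᶜ = 0) : P = Measure.dirac x := by
  ext s hs
  rw [Measure.dirac_apply' x hs]
  by_cases hxs : x ∈ s
  · have h1 : P sᶜ = 0 :=
      measure_mono_null (compl_subset_compl.2 (singleton_subset_iff.2 hxs)) h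
    have h2 := measure_add_measure_compl (μ := P) hs
    rw [h1, add_zero, measure_univ] at h2
    simp [indicator_of_mem hxs, h2]
  · have hsub : s ⊆ {x}ᶜ := fun y hy hy' => hxs (mem_singleton_iff.1 hy' ▸ hy)
    simp [measure_mono_null hsub h, indicator_of_notMem hxs]

/-- Writing `[0,1] \ Δ = ⋃_n (a_n, b_n)` with `a_n, b_n` in the ternary
Cantor set `Δ`, the space `Φ_Δ` is a closed subspace of `C([0,1])` separating points and
containing the constants, and the `Φ_Δ`-Choquet boundary of `[0,1]` is exactly `Δ`. -/
theorem stmt19 (a b : ℕ → ℝ)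
    (hmem : ∀ n : ℕ, a n ∈ cantorSet ∧ b n ∈ cantorSet)
    (hab : ∀ n : ℕ, a n < b n)
    (hdecomp : Set.Icc (0 : ℝ) 1 \ cantorSet = ⋃ n : ℕ, Set.Ioo (a n) (b n)) :
    IsClosed ((PhiDelta a b : Submodule ℝ C(unitInterval, ℝ)) : Set C(unitInterval, ℝ)) ∧
    (∀ x y : unitInterval, x ≠ y → ∃ φ ∈ PhiDelta a b, φ x ≠ φ y) ∧
    (∀ c : ℝ, ContinuousMap.const unitInterval c ∈ PhiDelta a b) ∧
    ChoquetBoundary (PhiDelta a b) = {x : unitInterval | (x : ℝ) ∈ cantorSet} := by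
  refine ⟨?_, ?_, ?_, ?_⟩
  · -- closedness
    have h : ((PhiDelta a b : Submodule ℝ C(unitInterval, ℝ)) : Set C(unitInterval, ℝ)) =
        ⋂ n : ℕ, {φ : C(unitInterval, ℝ) | AffineOnIcc φ (a n) (b n)} := by
      ext φ
      simp only [SetLike.mem_coe, mem_phiDelta, mem_iInter, mem_setOf_eq]
    rw [h]
    exact isClosed_iInter fun n => affine_closed (a n) (b n)
  · -- separation
    intro x y hxy
    refine ⟨⟨fun z => (z : ℝ), continuous_subtype_val⟩, ?_, ?_⟩
    · intro n u v hu hv t ht z hz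
      simpa using hz
    · simp only [ContinuousMap.coe_mk]
      exact fun h => hxy (Subtype.ext h)
  · -- constants
    intro c n u v hu hv t ht z hz
    simp only [ContinuousMap.const_apply]
    ring
  · -- Choquet boundary
    ext x
    simp only [mem_setOf_eq]
    constructor
    · -- boundary ⊆ cantor
      intro hx
      by_contra hc
      have hx2 : (x : ℝ) ∈ Set.Icc (0 : ℝ) 1 \ cantorSet := ⟨x.2, hc⟩
      rw [hdecomp] at hx2
      obtain ⟨n, hn⟩ := mem_iUnion.1 hx2
      set A : unitInterval := ⟨a n, cantorSet_subset_unitInterval (hmem n).1⟩ with hA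
      set B : unitInterval := ⟨b n, cantorSet_subset_unitInterval (hmem n).2⟩ with hB
      have hba : (0 : ℝ) < b n - a n := by linarith [hab n]
      set α : ℝ := (b n - (x : ℝ)) / (b n - a n) with hαdef
      have hα0 : 0 < α := div_pos (by linarith [hn.2]) hba
      have hα1 : α < 1 := (div_lt_one hba).2 (by linarith [hn.1])
      set μ : Measure unitInterval :=
        ENNReal.ofReal α • Measure.dirac A + ENNReal.ofReal (1 - α) • Measure.dirac B with hμ
      have hprob : IsProbabilityMeasure μ := by
        constructor
        rw [hμ]
        simp only [Measure.add_apply, Measure.smul_apply, smul_eq_mul,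
          Measure.dirac_apply_of_mem (mem_univ A), Measure.dirac_apply_of_mem (mem_univ B),
          mul_one]
        rw [← ENNReal.ofReal_add hα0.le (by linarith)]
        norm_num
      set P : ProbabilityMeasure unitInterval := ⟨μ, hprob⟩ with hP
      have hkey : α * (b n - a n) = b n - (x : ℝ) := div_mul_cancel₀ _ hba.ne'
      have hPmem : P ∈ MxSet (PhiDelta a b) x := by
        intro φ hφ
        have hcoe : (P : Measure unitInterval) = μ := rfl
        rw [hcoe, hμ, integral_two_point α (1 - α) hα0.le (by linarith) A B φ φ.continuous]
        have := hφ n A B ⟨le_refl _, (hab n).le⟩ ⟨(hab n).le, le_refl _⟩ α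
          ⟨hα0.le, hα1.le⟩ x (by push_cast [hA, hB]; nlinarith [hkey])
        exact this
      have hdir := hx P hPmem
      have hcoe : (P : Measure unitInterval) = μ := rfl
      rw [hcoe] at hdir
      have heval := congrArg (fun m : Measure unitInterval => m {x}) hdir
      simp only [hμ, Measure.add_apply, Measure.smul_apply, smul_eq_mul] at heval
      have hAx : A ∉ ({x} : Set unitInterval) := by
        simp only [mem_singleton_iff]
        exact fun h => ne_of_lt hn.1 (Subtype.ext_iff.1 h)
      have hBx : B ∉ ({x} : Set unitInterval) := by
        simp only [mem_singleton_iff]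
        exact fun h => ne_of_gt hn.2 (Subtype.ext_iff.1 h)
      rw [Measure.dirac_apply' A (measurableSet_singleton x),
        Measure.dirac_apply' B (measurableSet_singleton x),
        indicator_of_notMem hAx, indicator_of_notMem hBx,
        Measure.dirac_apply_of_mem (mem_singleton x)] at heval
      simp at heval
    · -- cantor ⊆ boundary
      intro hx P hPmem
      have hnot : ∀ n : ℕ, (x : ℝ) ∉ Set.Ioo (a n) (b n) := by
        intro n hmem'
        have : (x : ℝ) ∈ Set.Icc (0 : ℝ) 1 \ cantorSet := by
          rw [hdecomp]
          exact mem_iUnion.2 ⟨n, hmem'⟩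
        exact this.2 hx
      have htent : tent (x : ℝ) ∈ PhiDelta a b :=
        fun n => tent_affineOn (x : ℝ) (a n) (b n) (hnot n)
      have h1 : tent (x : ℝ) x = 1 := by simp [tent]
      have h2 := hPmem (tent (x : ℝ)) htent
      rw [h1] at h2
      -- ∫ (1 - tent) = 0
      have hint : Integrable (fun y : unitInterval => |(y : ℝ) - (x : ℝ)|)
          (P : Measure unitInterval) := by
        rw [← integrableOn_univ]
        exact (by fun_prop : Continuous fun y : unitInterval => |(y : ℝ) - (x : ℝ)|)
          |>.continuousOn.integrableOn_compact' isCompact_univ MeasurableSet.univ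
      have hzero : ∫ y, |(y : ℝ) - (x : ℝ)| ∂(P : Measure unitInterval) = 0 := by
        have heq : ∀ y : unitInterval, |(y : ℝ) - (x : ℝ)| = 1 - tent (x : ℝ) y := by
          intro y; simp [tent]
        rw [show (fun y : unitInterval => |(y : ℝ) - (x : ℝ)|)
            = fun y : unitInterval => 1 - tent (x : ℝ) y from funext heq]
        rw [integral_sub (integrable_const 1) (by
          rw [← integrableOn_univ]
          exact (tent (x:ℝ)).continuous.continuousOn.integrableOn_compact'
            isCompact_univ MeasurableSet.univ)]
        simp [← h2]
      have hae := (integral_eq_zero_iff_of_nonneg (fun y => abs_nonneg _) hint).1 hzero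
      have hnull : (P : Measure unitInterval) {x}ᶜ = 0 := by
        have := ae_iff.1 hae
        refine measure_mono_null ?_ this
        intro y hy
        simp only [mem_setOf_eq, Pi.zero_apply]
        intro h0
        exact hy (mem_singleton_iff.2 (Subtype.ext (by
          have := abs_eq_zero.1 h0; linarith)))
      exact eq_dirac_of_null_compl (P : Measure unitInterval) x hnull
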